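/- arXiv:1411.2956 — 2 statements merged into one kernel-verified Lean document; each statement's English description precedes it below -/
import Mathlib

section
/- (Comparison principle) Let Ω ⊂ ℝ^N be a bounded open set and let u, v ∈ W̃^{s,p}(Ω) satisfy u ≤ v a.e. in ℝ^N∖Ω, together with the inequality ∬_{ℝ^N×ℝ^N} (u(x)−u(y))^⟨p−1⟩(φ(x)−φ(y))/|x−y|^{N+ps} dx dy ≤ ∬_{ℝ^N×ℝ^N} (v(x)−v(y))^⟨p−1⟩(φ(x)−φ(y))/|x−y|^{N+ps} dx dy for every φ ∈ W^{s,p}_0(Ω) with φ ≥ 0 a.e. in Ω. Then u ≤ v a.e. in Ω. -/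
open MeasureTheory Metric Set Filter Topology

noncomputable section

/-- Signed power `a^⟨q⟩ = |a|^(q-1) · a`. -/
def spow (a q : ℝ) : ℝ := |a| ^ (q - 1) * a

/-- Euclidean space `ℝ^N`. -/
abbrev Rn (N : ℕ) := EuclideanSpace ℝ (Fin N)

/-- The integrand of the Gagliardo seminorm. -/
def energyIntegrand (N : ℕ) (p s : ℝ) (φ : Rn N → ℝ) (z : Rn N × Rn N) : ℝ :=
  |φ z.1 - φ z.2| ^ p / ‖z.1 - z.2‖ ^ ((N : ℝ) + p * s)

/-- The integrand of the nonlinear pairing `(u, φ)`. -/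
def gker (N : ℕ) (p s : ℝ) (u φ : Rn N → ℝ) (z : Rn N × Rn N) : ℝ :=
  spow (u z.1 - u z.2) (p - 1) * (φ z.1 - φ z.2) / ‖z.1 - z.2‖ ^ ((N : ℝ) + p * s)

/-- `φ ∈ W^{s,p}_0(Ω)`. -/
def memW0 (N : ℕ) (p s : ℝ) (Ω : Set (Rn N)) (φ : Rn N → ℝ) : Prop :=
  MemLp φ (ENNReal.ofReal p) volume ∧
  Integrable (energyIntegrand N p s φ) volume ∧
  ∀ᵐ x, x ∉ Ω → φ x = 0

/-- `u ∈ W̃^{s,p}(Ω)` (for bounded `Ω`). -/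
def memWtilde (N : ℕ) (p s : ℝ) (Ω : Set (Rn N)) (u : Rn N → ℝ) : Prop :=
  AEStronglyMeasurable u volume ∧
  (∀ K : Set (Rn N), IsCompact K → IntegrableOn (fun x => |u x| ^ p) K) ∧
  (∃ U : Set (Rn N), IsOpen U ∧ closure Ω ⊆ U ∧
     IntegrableOn (fun x => |u x| ^ p) U ∧
     IntegrableOn (energyIntegrand N p s u) (U ×ˢ U)) ∧
  Integrable (fun x => |u x| ^ (p - 1) / (1 + ‖x‖) ^ ((N : ℝ) + p * s))

/-- `u ∈ W̃^{s,p}_loc(Ω)`. -/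
def memWtildeLoc (N : ℕ) (p s : ℝ) (Ω : Set (Rn N)) (u : Rn N → ℝ) : Prop :=
  ∀ Ω' : Set (Rn N), IsOpen Ω' → Bornology.IsBounded Ω' → Ω' ⊆ Ω → memWtilde N p s Ω' u

/-- `u` is a weak solution of `(-Δ)^s_p u = f` in `Ω`. -/
def isWeakSol (N : ℕ) (p s : ℝ) (Ω : Set (Rn N)) (u f : Rn N → ℝ) : Prop :=
  ∀ Ω' : Set (Rn N), IsOpen Ω' → Bornology.IsBounded Ω' → Ω' ⊆ Ω →
    ∀ φ : Rn N → ℝ, memW0 N p s Ω' φ →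
      (∫ z : Rn N × Rn N, gker N p s u φ z) = ∫ x in Ω', f x * φ x

/-- `(-Δ)^s_p u ≤ g` weakly in `Ω`. -/
def weakLE (N : ℕ) (p s : ℝ) (Ω : Set (Rn N)) (u g : Rn N → ℝ) : Prop :=
  ∀ φ : Rn N → ℝ, memW0 N p s Ω φ → (∀ᵐ x, 0 ≤ φ x) →
    (∫ z : Rn N × Rn N, gker N p s u φ z) ≤ ∫ x in Ω, g x * φ x

/-- `(-Δ)^s_p u ≥ g` weakly in `Ω`. -/
def weakGE (N : ℕ) (p s : ℝ) (Ω : Set (Rn N)) (u g : Rn N → ℝ) : Prop :=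
  ∀ φ : Rn N → ℝ, memW0 N p s Ω φ → (∀ᵐ x, 0 ≤ φ x) →
    (∫ x in Ω, g x * φ x) ≤ ∫ z : Rn N × Rn N, gker N p s u φ z

/-- The nonlocal tail. -/
def tailF (N : ℕ) (p s : ℝ) (v : Rn N → ℝ) (x₀ : Rn N) (R : ℝ) : ℝ :=
  (R ^ (p * s) * ∫ y in {y : Rn N | R ≤ dist y x₀}, |v y| ^ (p - 1) / ‖x₀ - y‖ ^ ((N : ℝ) + p * s)) ^ (1 / (p - 1))


/-!
Test the inequality with `(u - v)⁺`, which vanishes outside `Ω`. The signed power is strictly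
increasing and `a ↦ a⁺` is monotone, so the integrand of the difference of the two pairings is
nonnegative and vanishes only where `(u - v)⁺ x = (u - v)⁺ y`. Hence `(u - v)⁺` is a.e. constant,
and since it vanishes on the complement of the bounded set `Ω`, which has positive measure, it is
zero.

The technical part is that `(u - v)⁺` is an admissible test function and that both pairings are
integrable. Near `closure Ω` this follows from the local Gagliardo bounds of `u` and `v`; far from
it the kernel `‖x - y‖ ^ (-(N + p s))` is at most a multiple of `(1 + ‖x‖) ^ (-(N + p s))`, which
the tail condition in `memWtilde` controls.
-/

section SignedPower

variable {q : ℝ}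

lemma spow_neg (a q : ℝ) : spow (-a) q = -spow a q := by
  simp [spow]

lemma spow_of_nonneg {a : ℝ} (ha : 0 ≤ a) (hq : q ≠ 0) : spow a q = a ^ q := by
  rw [spow, abs_of_nonneg ha, ← Real.rpow_add_one' ha (by simpa using hq), sub_add_cancel]

lemma abs_spow (hq : q ≠ 0) (a : ℝ) : |spow a q| = |a| ^ q := by
  rw [← spow_of_nonneg (abs_nonneg a) hq, spow, spow, abs_mul, abs_abs,
    abs_of_nonneg (Real.rpow_nonneg (abs_nonneg a) _)]

lemma spow_strictMono (hq : 0 < q) : StrictMono (spow · q) := by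
  have hpos : StrictMonoOn (spow · q) (Ici 0) := fun a ha b hb hab => by
    simp only [spow_of_nonneg ha hq.ne', spow_of_nonneg hb hq.ne']
    exact Real.strictMonoOn_rpow_Ici_of_exponent_pos hq ha hb hab
  have hneg : StrictMonoOn (spow · q) (Iic 0) := fun a ha b hb hab => by
    have := hpos (mem_Ici.2 (neg_nonneg.2 hb)) (mem_Ici.2 (neg_nonneg.2 ha)) (neg_lt_neg hab)
    simpa only [spow_neg, neg_lt_neg_iff] using this
  rw [← strictMonoOn_univ, ← Iic_union_Ici (a := (0 : ℝ))]
  exact hneg.union hpos isGreatest_Iic isLeast_Ici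

end SignedPower

section Inequalities

lemma max_rpow_le_add_rpow {a b : ℝ} (ha : 0 ≤ a) (hb : 0 ≤ b) (q : ℝ) :
    max a b ^ q ≤ a ^ q + b ^ q := by
  rcases max_cases a b with ⟨h, -⟩ | ⟨h, -⟩ <;> rw [h]
  · linarith [Real.rpow_nonneg hb q]
  · linarith [Real.rpow_nonneg ha q]

lemma rpow_sub_one_mul_le_add_rpow {p a b : ℝ} (hp : 1 ≤ p) (ha : 0 ≤ a) (hb : 0 ≤ b) :
    a ^ (p - 1) * b ≤ a ^ p + b ^ p := by
  have hm : 0 ≤ max a b := le_max_of_le_left ha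
  calc a ^ (p - 1) * b ≤ max a b ^ (p - 1) * max a b :=
        mul_le_mul (Real.rpow_le_rpow ha (le_max_left a b) (by linarith)) (le_max_right a b) hb
          (Real.rpow_nonneg hm _)
    _ = max a b ^ p := by
        rw [← Real.rpow_add_one' hm (by linarith), sub_add_cancel]
    _ ≤ a ^ p + b ^ p := max_rpow_le_add_rpow ha hb p

lemma abs_sub_rpow_le {q : ℝ} (hq : 0 ≤ q) (a b : ℝ) :
    |a - b| ^ q ≤ 2 ^ q * (|a| ^ q + |b| ^ q) := by
  have hm : 0 ≤ max |a| |b| := le_max_of_le_left (abs_nonneg a)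
  calc |a - b| ^ q ≤ (2 * max |a| |b|) ^ q := by
        refine Real.rpow_le_rpow (abs_nonneg _) ?_ hq
        linarith [abs_sub a b, le_max_left |a| |b|, le_max_right |a| |b|]
    _ = 2 ^ q * max |a| |b| ^ q := Real.mul_rpow zero_le_two hm
    _ ≤ 2 ^ q * (|a| ^ q + |b| ^ q) := by
        gcongr
        exact max_rpow_le_add_rpow (abs_nonneg a) (abs_nonneg b) q

lemma abs_posPart_sub_posPart_rpow_le {p : ℝ} (hp : 0 ≤ p) (a b c d : ℝ) :
    |(a - b)⁺ - (c - d)⁺| ^ p ≤ 2 ^ p * (|a - c| ^ p + |b - d| ^ p) := by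
  calc |(a - b)⁺ - (c - d)⁺| ^ p ≤ |(a - c) - (b - d)| ^ p := by
        refine Real.rpow_le_rpow (abs_nonneg _) ?_ hp
        rw [show (a - c) - (b - d) = (a - b) - (c - d) by ring]
        exact abs_max_sub_max_le_abs (a - b) (c - d) 0
    _ ≤ 2 ^ p * (|a - c| ^ p + |b - d| ^ p) := abs_sub_rpow_le hp _ _

lemma spow_sub_spow_mul_posPart_sub_pos {q a b c d : ℝ} (hq : 0 < q) (h : a - b = c - d)
    (hne : c⁺ ≠ d⁺) : 0 < (spow a q - spow b q) * (c⁺ - d⁺) := by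
  rcases lt_or_gt_of_ne hne with hlt | hlt
  · have hcd : c < d := by
      by_contra! hdc
      exact hlt.not_ge (posPart_mono hdc)
    exact mul_pos_of_neg_of_neg (sub_neg.2 (spow_strictMono hq (by linarith))) (sub_neg.2 hlt)
  · have hcd : d < c := by
      by_contra! hdc
      exact hlt.not_ge (posPart_mono hdc)
    exact mul_pos (sub_pos.2 (spow_strictMono hq (by linarith))) (sub_pos.2 hlt)

lemma spow_sub_spow_mul_posPart_sub_nonneg {q a b c d : ℝ} (hq : 0 < q) (h : a - b = c - d) :
    0 ≤ (spow a q - spow b q) * (c⁺ - d⁺) := by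
  by_cases hne : c⁺ = d⁺
  · simp [hne]
  · exact (spow_sub_spow_mul_posPart_sub_pos hq h hne).le

end Inequalities

section ProductMeasure

variable {α : Type*} [MeasurableSpace α] {μ : Measure α} [SFinite μ]

lemma ae_eq_const_of_ae_eq_prod [NeZero μ] {β : Type*} {f : α → β}
    (h : ∀ᵐ z ∂μ.prod μ, f z.1 = f z.2) : ∃ c, ∀ᵐ x ∂μ, f x = c := by
  have : (ae μ).NeBot := ae_neBot.2 (NeZero.ne μ)
  obtain ⟨x, hx⟩ := (Measure.ae_ae_of_ae_prod h).exists
  exact ⟨f x, hx.mono fun y hy => hy.symm⟩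

lemma integrable_of_integrableOn_prod_of_swap {E : Type*} [NormedAddCommGroup E]
    {f : α × α → E} {U : Set α} (hswap : ∀ z, f z.swap = f z)
    (hnear : IntegrableOn f (U ×ˢ U) (μ.prod μ)) (hfar : IntegrableOn f (Uᶜ ×ˢ univ) (μ.prod μ)) :
    Integrable f (μ.prod μ) := by
  have hfar' : IntegrableOn f (univ ×ˢ Uᶜ) (μ.prod μ) := by
    rw [← preimage_swap_prod, ← (Measure.measurePreserving_swap).integrableOn_comp_preimage
      MeasurableEquiv.prodComm.measurableEmbedding]
    have : f ∘ Prod.swap = f := funext hswap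
    rwa [this]
  rw [← integrableOn_univ]
  refine ((hnear.union hfar).union hfar').mono_set fun z _ => ?_
  by_cases h1 : z.1 ∈ U <;> by_cases h2 : z.2 ∈ U <;> simp [h1, h2]

end ProductMeasure

section Geometry

variable {E : Type*} [NormedAddCommGroup E]

lemma IsCompact.exists_one_add_norm_le_mul_norm_sub {K U : Set E} (hK : IsCompact K)
    (hU : IsOpen U) (hKU : K ⊆ U) :
    ∃ M > 0, ∀ y ∈ K, ∀ x ∉ U, 1 + ‖x‖ ≤ M * ‖x - y‖ := by
  obtain ⟨δ, hδ, hδU⟩ := hK.exists_thickening_subset_open hU hKU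
  obtain ⟨R, hR, hKR⟩ := hK.isBounded.exists_pos_norm_le
  refine ⟨1 + (1 + R) / δ, by positivity, fun y hy x hx => ?_⟩
  have hxy : δ ≤ ‖x - y‖ := by
    by_contra! h
    exact hx (hδU (mem_thickening_iff.2 ⟨y, hy, by rwa [dist_eq_norm]⟩))
  have hfar : 1 + R ≤ (1 + R) / δ * ‖x - y‖ := by
    rw [div_mul_eq_mul_div, le_div_iff₀ hδ]
    exact mul_le_mul_of_nonneg_left hxy (by positivity)
  linarith [norm_le_norm_sub_add x y, hKR y hy]

lemma div_norm_sub_rpow_le {x y : E} {M r b : ℝ} (h : 1 + ‖x‖ ≤ M * ‖x - y‖) (hr : 0 ≤ r)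
    (hb : 0 ≤ b) : b / ‖x - y‖ ^ r ≤ M ^ r * (b / (1 + ‖x‖) ^ r) := by
  have hx : 0 < 1 + ‖x‖ := by positivity
  have hM : 0 < M := pos_of_mul_pos_left (hx.trans_le h) (norm_nonneg _)
  have hxy : 0 < ‖x - y‖ := pos_of_mul_pos_right (hx.trans_le h) hM.le
  have hMr : 0 < M ^ r := Real.rpow_pos_of_pos hM r
  calc b / ‖x - y‖ ^ r = M ^ r * (b / (M * ‖x - y‖) ^ r) := by
        rw [Real.mul_rpow hM.le hxy.le]
        field_simp
    _ ≤ M ^ r * (b / (1 + ‖x‖) ^ r) := by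
        gcongr

lemma div_norm_sub_rpow_le_of_far {K U : Set E} {M r b : ℝ}
    (hM : ∀ y ∈ K, ∀ x ∉ U, 1 + ‖x‖ ≤ M * ‖x - y‖) (hr : 0 ≤ r) (hb : 0 ≤ b) {x y : E}
    (hx : x ∉ U) (hy : y ∉ K → b = 0) : b / ‖x - y‖ ^ r ≤ M ^ r * (b / (1 + ‖x‖) ^ r) := by
  by_cases hyK : y ∈ K
  · exact div_norm_sub_rpow_le (hM y hyK x hx) hr hb
  · simp [hy hyK]

end Geometry

section Gagliardo

variable {N : ℕ} {p s : ℝ}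

lemma energyIntegrand_nonneg (φ : Rn N → ℝ) (z : Rn N × Rn N) :
    0 ≤ energyIntegrand N p s φ z := by
  unfold energyIntegrand; positivity

lemma energyIntegrand_swap (φ : Rn N → ℝ) (z : Rn N × Rn N) :
    energyIntegrand N p s φ z.swap = energyIntegrand N p s φ z := by
  simp [energyIntegrand, abs_sub_comm, norm_sub_rev]

lemma gker_swap (u φ : Rn N → ℝ) (z : Rn N × Rn N) :
    gker N p s u φ z.swap = gker N p s u φ z := by
  simp only [gker, Prod.fst_swap, Prod.snd_swap, norm_sub_rev z.2]
  rw [← neg_sub (u z.1), ← neg_sub (φ z.1), spow_neg, neg_mul_neg]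

lemma abs_gker (hp : p ≠ 1) (u φ : Rn N → ℝ) (z : Rn N × Rn N) :
    |gker N p s u φ z| =
      |u z.1 - u z.2| ^ (p - 1) * |φ z.1 - φ z.2| / ‖z.1 - z.2‖ ^ ((N : ℝ) + p * s) := by
  rw [gker, abs_div, abs_mul, abs_spow (sub_ne_zero.2 hp),
    abs_of_nonneg (Real.rpow_nonneg (norm_nonneg _) _)]

lemma abs_gker_le (hp : 1 < p) (u φ : Rn N → ℝ) (z : Rn N × Rn N) :
    |gker N p s u φ z| ≤ energyIntegrand N p s u z + energyIntegrand N p s φ z := by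
  rw [abs_gker hp.ne', energyIntegrand, energyIntegrand, ← add_div]
  gcongr
  exact rpow_sub_one_mul_le_add_rpow hp.le (abs_nonneg _) (abs_nonneg _)

lemma aestronglyMeasurable_energyIntegrand {φ : Rn N → ℝ} (hφ : AEMeasurable φ) :
    AEStronglyMeasurable (energyIntegrand N p s φ) := by
  have h1 : AEMeasurable (fun z : Rn N × Rn N => φ z.1) := hφ.comp_fst
  have h2 : AEMeasurable (fun z : Rn N × Rn N => φ z.2) := hφ.comp_snd
  unfold energyIntegrand
  exact AEMeasurable.aestronglyMeasurable (by fun_prop)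

lemma aestronglyMeasurable_gker {u φ : Rn N → ℝ} (hu : AEMeasurable u) (hφ : AEMeasurable φ) :
    AEStronglyMeasurable (gker N p s u φ) := by
  have hu1 : AEMeasurable (fun z : Rn N × Rn N => u z.1) := hu.comp_fst
  have hu2 : AEMeasurable (fun z : Rn N × Rn N => u z.2) := hu.comp_snd
  have h1 : AEMeasurable (fun z : Rn N × Rn N => φ z.1) := hφ.comp_fst
  have h2 : AEMeasurable (fun z : Rn N × Rn N => φ z.2) := hφ.comp_snd
  unfold gker spow
  exact AEMeasurable.aestronglyMeasurable (by fun_prop)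

end Gagliardo

section FarField

variable {N : ℕ} {p s : ℝ} {K U : Set (Rn N)}

lemma integrable_inv_one_add_norm_rpow {r : ℝ} (hr : (N : ℝ) < r) :
    Integrable fun x : Rn N => ((1 + ‖x‖) ^ r)⁻¹ := by
  refine (integrable_one_add_norm (E := Rn N) (μ := volume) (by simpa using hr)).congr
    (ae_of_all _ fun x => ?_)
  simp [Real.rpow_neg (by positivity : (0 : ℝ) ≤ 1 + ‖x‖)]

lemma integrable_energyIntegrand (hp : 0 < p) (hs : 0 < s) (hK : IsCompact K) (hU : IsOpen U)
    (hKU : K ⊆ U) {φ : Rn N → ℝ} (hφ : AEMeasurable φ) (hsupp : ∀ᵐ x, x ∉ K → φ x = 0)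
    (hφp : Integrable fun x => |φ x| ^ p)
    (hnear : IntegrableOn (energyIntegrand N p s φ) (U ×ˢ U)) :
    Integrable (energyIntegrand N p s φ) := by
  obtain ⟨M, -, hM⟩ := hK.exists_one_add_norm_le_mul_norm_sub hU hKU
  have hr : (N : ℝ) < N + p * s := lt_add_of_pos_right _ (mul_pos hp hs)
  refine integrable_of_integrableOn_prod_of_swap (energyIntegrand_swap φ) hnear ?_
  have hG := ((integrable_inv_one_add_norm_rpow hr).mul_prod hφp).const_mul
    (M ^ ((N : ℝ) + p * s))
  refine hG.integrableOn.mono' (aestronglyMeasurable_energyIntegrand hφ).restrict ?_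
  filter_upwards [ae_restrict_mem (hU.measurableSet.compl.prod .univ),
    ae_restrict_of_ae (Measure.quasiMeasurePreserving_fst.ae hsupp),
    ae_restrict_of_ae (Measure.quasiMeasurePreserving_snd.ae hsupp)] with z hz h1 h2
  have hz1 : z.1 ∉ U := hz.1
  rw [Real.norm_eq_abs, abs_of_nonneg (energyIntegrand_nonneg φ z), energyIntegrand,
    h1 (fun h => hz1 (hKU h)), zero_sub, abs_neg]
  calc _ ≤ _ := div_norm_sub_rpow_le_of_far hM (by positivity) (by positivity) hz1
          fun hy => by rw [h2 hy, abs_zero, Real.zero_rpow hp.ne']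
    _ = _ := by ring

lemma integrable_gker (hp : 1 < p) (hs : 0 < s) (hK : IsCompact K) (hU : IsOpen U)
    (hKU : K ⊆ U) {u φ : Rn N → ℝ} (hu : AEMeasurable u) (hφ : AEMeasurable φ)
    (hsupp : ∀ᵐ x, x ∉ K → φ x = 0)
    (htail : Integrable fun x => |u x| ^ (p - 1) / (1 + ‖x‖) ^ ((N : ℝ) + p * s))
    (hφ1 : Integrable fun x => |φ x|) (hmix : Integrable fun x => |u x| ^ (p - 1) * |φ x|)
    (hnear_u : IntegrableOn (energyIntegrand N p s u) (U ×ˢ U))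
    (hnear_φ : IntegrableOn (energyIntegrand N p s φ) (U ×ˢ U)) :
    Integrable (gker N p s u φ) := by
  obtain ⟨M, hM0, hM⟩ := hK.exists_one_add_norm_le_mul_norm_sub hU hKU
  set r : ℝ := (N : ℝ) + p * s
  have hr : (N : ℝ) < r := lt_add_of_pos_right _ (mul_pos (by linarith) hs)
  have hgm := aestronglyMeasurable_gker (p := p) (s := s) hu hφ
  have hnear : IntegrableOn (gker N p s u φ) (U ×ˢ U) :=
    (hnear_u.add hnear_φ).mono' hgm.restrict (ae_of_all _ fun z => abs_gker_le hp u φ z)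
  refine integrable_of_integrableOn_prod_of_swap (gker_swap u φ) hnear ?_
  have hG := ((htail.mul_prod hφ1).add
    ((integrable_inv_one_add_norm_rpow hr).mul_prod hmix)).const_mul (M ^ r * 2 ^ (p - 1))
  refine hG.integrableOn.mono' hgm.restrict ?_
  filter_upwards [ae_restrict_mem (hU.measurableSet.compl.prod .univ),
    ae_restrict_of_ae (Measure.quasiMeasurePreserving_fst.ae hsupp),
    ae_restrict_of_ae (Measure.quasiMeasurePreserving_snd.ae hsupp)] with z hz h1 h2
  have hz1 : z.1 ∉ U := hz.1
  rw [Real.norm_eq_abs, abs_gker hp.ne', h1 (fun h => hz1 (hKU h)), zero_sub, abs_neg]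
  calc _ ≤ M ^ r * (|u z.1 - u z.2| ^ (p - 1) * |φ z.2| / (1 + ‖z.1‖) ^ r) :=
        div_norm_sub_rpow_le_of_far hM (by positivity) (by positivity) hz1
          fun hy => by rw [h2 hy, abs_zero, mul_zero]
    _ ≤ M ^ r * (2 ^ (p - 1) * (|u z.1| ^ (p - 1) + |u z.2| ^ (p - 1)) * |φ z.2|
          / (1 + ‖z.1‖) ^ r) := by
        gcongr
        exact abs_sub_rpow_le (by linarith) _ _
    _ = _ := by simp only [Pi.add_apply]; ring

end FarField

section Positivity

variable {N : ℕ} {p s : ℝ}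

lemma gker_sub_gker_posPart_sub (u v : Rn N → ℝ) (z : Rn N × Rn N) :
    gker N p s u (u - v)⁺ z - gker N p s v (u - v)⁺ z =
      (spow (u z.1 - u z.2) (p - 1) - spow (v z.1 - v z.2) (p - 1)) *
        ((u z.1 - v z.1)⁺ - (u z.2 - v z.2)⁺) / ‖z.1 - z.2‖ ^ ((N : ℝ) + p * s) := by
  simp only [gker, Pi.posPart_apply, Pi.sub_apply]
  ring

lemma ae_posPart_sub_eq_of_integral_gker_le (hp : 1 < p) {u v : Rn N → ℝ}
    (hu : Integrable (gker N p s u (u - v)⁺)) (hv : Integrable (gker N p s v (u - v)⁺))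
    (hle : ∫ z, gker N p s u (u - v)⁺ z ≤ ∫ z, gker N p s v (u - v)⁺ z) :
    ∀ᵐ z : Rn N × Rn N, (u - v)⁺ z.1 = (u - v)⁺ z.2 := by
  have hq : 0 < p - 1 := by linarith
  set D := fun z => gker N p s u (u - v)⁺ z - gker N p s v (u - v)⁺ z
  have hD : 0 ≤ D := fun z => by
    simp only [D, Pi.zero_apply, gker_sub_gker_posPart_sub]
    exact div_nonneg (spow_sub_spow_mul_posPart_sub_nonneg hq (by ring)) (by positivity)
  have hD0 : D =ᵐ[volume] 0 := by
    refine (integral_eq_zero_iff_of_nonneg hD (hu.sub hv)).1 (le_antisymm ?_ (integral_nonneg hD))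
    rw [integral_sub hu hv]
    linarith
  filter_upwards [hD0] with z hz
  by_contra hne
  simp only [Pi.posPart_apply, Pi.sub_apply] at hne
  rw [Pi.zero_apply, show D z = _ from gker_sub_gker_posPart_sub u v z, div_eq_zero_iff,
    Real.rpow_eq_zero_iff_of_nonneg (norm_nonneg _), norm_eq_zero, sub_eq_zero] at hz
  rcases hz with h | ⟨h, -⟩
  · exact (spow_sub_spow_mul_posPart_sub_pos hq (by ring) hne).ne' h
  · exact hne (by rw [h])

end Positivity

section Rigidity

variable {E : Type*} [NormedAddCommGroup E] [NormedSpace ℝ E] [FiniteDimensional ℝ E]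
  [Nontrivial E] [MeasurableSpace E] [BorelSpace E] {μ : Measure E} [μ.IsAddHaarMeasure]

lemma Bornology.IsBounded.measure_compl_ne_zero {Ω : Set E} (hΩ : Bornology.IsBounded Ω) :
    μ Ωᶜ ≠ 0 := by
  intro h
  have := measure_univ_of_isAddLeftInvariant μ
  have : μ univ ≤ μ Ω + μ Ωᶜ := by
    rw [← union_compl_self Ω]; exact measure_union_le Ω Ωᶜ
  simp_all [hΩ.measure_lt_top.ne]

lemma ae_eq_zero_of_ae_eq_prod {β : Type*} [Zero β] {f : E → β} {Ω : Set E}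
    (hΩ : Bornology.IsBounded Ω) (hpairs : ∀ᵐ z ∂μ.prod μ, f z.1 = f z.2)
    (hout : ∀ᵐ x ∂μ, x ∉ Ω → f x = 0) : f =ᵐ[μ] 0 := by
  obtain ⟨c, hc⟩ := ae_eq_const_of_ae_eq_prod hpairs
  obtain ⟨x, hxΩ, hxc, hx0⟩ :=
    ((frequently_ae_mem_iff.2 hΩ.measure_compl_ne_zero).and_eventually (hc.and hout)).exists
  filter_upwards [hc] with y hy
  rw [hy, ← hxc, hx0 hxΩ, Pi.zero_apply]

end Rigidity

section CompactSupport

variable {α : Type*} [MeasurableSpace α] {μ : Measure α} {K : Set α} {p : ℝ} {φ : α → ℝ}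

lemma memLp_ofReal_of_integrable_abs_rpow (hp : 0 < p) (hφ : AEStronglyMeasurable φ μ)
    (h : Integrable (fun x => |φ x| ^ p) μ) : MemLp φ (ENNReal.ofReal p) μ :=
  (integrable_norm_rpow_iff hφ (by simpa using hp) ENNReal.ofReal_ne_top).1
    (by simpa [ENNReal.toReal_ofReal hp.le] using h)

lemma integrable_abs_of_integrableOn_abs_rpow (hp : 1 ≤ p) (hK : μ K ≠ ⊤)
    (hφ : AEStronglyMeasurable φ μ) (hφK : IntegrableOn (fun x => |φ x| ^ p) K μ)
    (hsupp : ∀ᵐ x ∂μ, x ∉ K → φ x = 0) : Integrable (fun x => |φ x|) μ := by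
  have : IsFiniteMeasure (μ.restrict K) := isFiniteMeasure_restrict.2 hK
  have h1 := integrable_norm_rpow_of_le hφ.restrict zero_le_one (by linarith) hp
    (by simpa [IntegrableOn] using hφK)
  refine IntegrableOn.integrable_of_ae_notMem_eq_zero (by simpa [IntegrableOn] using h1) ?_
  filter_upwards [hsupp] with x hx hxK
  simp [hx hxK]

lemma integrable_rpow_sub_one_mul_abs (hp : 1 ≤ p) {u : α → ℝ} (hu : AEMeasurable u μ)
    (hφ : AEMeasurable φ μ) (huK : IntegrableOn (fun x => |u x| ^ p) K μ)
    (hφK : IntegrableOn (fun x => |φ x| ^ p) K μ) (hsupp : ∀ᵐ x ∂μ, x ∉ K → φ x = 0) :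
    Integrable (fun x => |u x| ^ (p - 1) * |φ x|) μ := by
  refine IntegrableOn.integrable_of_ae_notMem_eq_zero (s := K) ?_ ?_
  · refine (huK.add hφK).mono' (AEMeasurable.aestronglyMeasurable (by fun_prop)).restrict
      (ae_of_all _ fun x => ?_)
    rw [Real.norm_eq_abs, abs_of_nonneg (by positivity)]
    exact rpow_sub_one_mul_le_add_rpow hp (abs_nonneg _) (abs_nonneg _)
  · filter_upwards [hsupp] with x hx hxK
    simp [hx hxK]

end CompactSupport

section PositivePart

variable {N : ℕ} {p s : ℝ} {u v : Rn N → ℝ}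

lemma energyIntegrand_posPart_sub_le (hp : 0 ≤ p) (z : Rn N × Rn N) :
    energyIntegrand N p s (u - v)⁺ z ≤
      2 ^ p * (energyIntegrand N p s u z + energyIntegrand N p s v z) := by
  simp only [energyIntegrand, Pi.posPart_apply, Pi.sub_apply]
  rw [← add_div, ← mul_div_assoc]
  gcongr
  exact abs_posPart_sub_posPart_rpow_le hp _ _ _ _

lemma integrableOn_energyIntegrand_posPart_sub (hp : 0 ≤ p) (hu : AEMeasurable u)
    (hv : AEMeasurable v) {S : Set (Rn N × Rn N)}
    (huS : IntegrableOn (energyIntegrand N p s u) S)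
    (hvS : IntegrableOn (energyIntegrand N p s v) S) :
    IntegrableOn (energyIntegrand N p s (u - v)⁺) S := by
  refine ((huS.add hvS).const_mul (2 ^ p)).mono'
    (aestronglyMeasurable_energyIntegrand ((hu.sub hv).sup aemeasurable_const)).restrict (ae_of_all _ fun z => ?_)
  rw [Real.norm_eq_abs, abs_of_nonneg (energyIntegrand_nonneg _ z)]
  exact energyIntegrand_posPart_sub_le hp z

lemma integrableOn_abs_posPart_sub_rpow (hp : 0 ≤ p) (hu : AEMeasurable u)
    (hv : AEMeasurable v) {S : Set (Rn N)} (huS : IntegrableOn (fun x => |u x| ^ p) S)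
    (hvS : IntegrableOn (fun x => |v x| ^ p) S) :
    IntegrableOn (fun x => |(u - v)⁺ x| ^ p) S := by
  have hψ : AEMeasurable (u - v)⁺ := (hu.sub hv).sup aemeasurable_const
  refine ((huS.add hvS).const_mul (2 ^ p)).mono'
    (AEMeasurable.aestronglyMeasurable (by fun_prop)).restrict (ae_of_all _ fun x => ?_)
  rw [Real.norm_eq_abs, abs_of_nonneg (by positivity)]
  simpa using abs_posPart_sub_posPart_rpow_le hp (u x) (v x) 0 0

lemma memW0_posPart_sub_and_integrable_gker (hp : 1 < p) (hs : 0 < s) {Ω : Set (Rn N)}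
    (hΩ : Bornology.IsBounded Ω) (hu : memWtilde N p s Ω u) (hv : memWtilde N p s Ω v)
    (hout : ∀ᵐ x, x ∉ Ω → u x ≤ v x) :
    memW0 N p s Ω (u - v)⁺ ∧ Integrable (gker N p s u (u - v)⁺) ∧
      Integrable (gker N p s v (u - v)⁺) := by
  obtain ⟨hp0, hp1⟩ : 0 < p ∧ 1 ≤ p := ⟨by linarith, hp.le⟩
  obtain ⟨hum, huK, ⟨Uu, hUu, hΩUu, -, hEu⟩, htu⟩ := hu
  obtain ⟨hvm, hvK, ⟨Uv, hUv, hΩUv, -, hEv⟩, htv⟩ := hv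
  replace hum := hum.aemeasurable
  replace hvm := hvm.aemeasurable
  have hK : IsCompact (closure Ω) := hΩ.isCompact_closure
  set U := Uu ∩ Uv
  have hKU : closure Ω ⊆ U := subset_inter hΩUu hΩUv
  replace hEu : IntegrableOn (energyIntegrand N p s u) (U ×ˢ U) :=
    hEu.mono_set (prod_mono inter_subset_left inter_subset_left)
  replace hEv : IntegrableOn (energyIntegrand N p s v) (U ×ˢ U) :=
    hEv.mono_set (prod_mono inter_subset_right inter_subset_right)
  have hψ : AEMeasurable (u - v)⁺ := (hum.sub hvm).sup aemeasurable_const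
  have hψΩ : ∀ᵐ x, x ∉ Ω → (u - v)⁺ x = 0 :=
    hout.mono fun x hx hxΩ => posPart_eq_zero.2 (sub_nonpos.2 (hx hxΩ))
  have hsupp : ∀ᵐ x, x ∉ closure Ω → (u - v)⁺ x = 0 :=
    hψΩ.mono fun x hx hxK => hx fun h => hxK (subset_closure h)
  have hψK := integrableOn_abs_posPart_sub_rpow hp0.le hum hvm (huK _ hK) (hvK _ hK)
  have hψp : Integrable fun x => |(u - v)⁺ x| ^ p := hψK.integrable_of_ae_notMem_eq_zero
    (hsupp.mono fun x hx hxK => by simp [hx hxK, Real.zero_rpow hp0.ne'])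
  have hψ1 := integrable_abs_of_integrableOn_abs_rpow hp1 hK.measure_lt_top.ne
    hψ.aestronglyMeasurable hψK hsupp
  have hEψ := integrableOn_energyIntegrand_posPart_sub hp0.le hum hvm hEu hEv
  refine ⟨⟨memLp_ofReal_of_integrable_abs_rpow hp0 hψ.aestronglyMeasurable hψp,
    integrable_energyIntegrand hp0 hs hK (hUu.inter hUv) hKU hψ hsupp hψp hEψ, hψΩ⟩, ?_, ?_⟩
  · exact integrable_gker hp hs hK (hUu.inter hUv) hKU hum hψ hsupp htu hψ1
      (integrable_rpow_sub_one_mul_abs hp1 hum hψ (huK _ hK) hψK hsupp) hEu hEψ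
  · exact integrable_gker hp hs hK (hUu.inter hUv) hKU hvm hψ hsupp htv hψ1
      (integrable_rpow_sub_one_mul_abs hp1 hvm hψ (hvK _ hK) hψK hsupp) hEv hEψ

end PositivePart

theorem statement5_general (N : ℕ) (hN : 1 ≤ N) (p s : ℝ) (hp : 1 < p) (hs : s ∈ Set.Ioo (0 : ℝ) 1)
    (Ω : Set (Rn N)) (hΩb : Bornology.IsBounded Ω)
    (u v : Rn N → ℝ) (hu : memWtilde N p s Ω u) (hv : memWtilde N p s Ω v)
    (hout : ∀ᵐ x, x ∉ Ω → u x ≤ v x)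
    (hineq : ∀ φ : Rn N → ℝ, memW0 N p s Ω φ → (∀ᵐ x, 0 ≤ φ x) →
      (∫ z : Rn N × Rn N, gker N p s u φ z) ≤ ∫ z : Rn N × Rn N, gker N p s v φ z) :
    ∀ᵐ x, x ∈ Ω → u x ≤ v x := by
  have : Nontrivial (Rn N) := have : Nonempty (Fin N) := ⟨⟨0, hN⟩⟩; inferInstance
  obtain ⟨hmem, hGu, hGv⟩ := memW0_posPart_sub_and_integrable_gker hp hs.1 hΩb hu hv hout
  have hpairs := ae_posPart_sub_eq_of_integral_gker_le hp hGu hGv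
    (hineq _ hmem (ae_of_all _ fun x => posPart_nonneg _))
  have hψΩ : ∀ᵐ x, x ∉ Ω → (u - v)⁺ x = 0 :=
    hout.mono fun x hx hxΩ => posPart_eq_zero.2 (sub_nonpos.2 (hx hxΩ))
  filter_upwards [ae_eq_zero_of_ae_eq_prod hΩb hpairs hψΩ] with x hx _
  exact sub_nonpos.1 (posPart_eq_zero.1 hx)

/-- Proposition 2.10: comparison principle. -/
theorem statement5 (N : ℕ) (hN : 1 ≤ N) (p s : ℝ) (hp : 1 < p) (hs : s ∈ Set.Ioo (0 : ℝ) 1)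
    (Ω : Set (Rn N)) (hΩo : IsOpen Ω) (hΩb : Bornology.IsBounded Ω)
    (u v : Rn N → ℝ) (hu : memWtilde N p s Ω u) (hv : memWtilde N p s Ω v)
    (hout : ∀ᵐ x, x ∉ Ω → u x ≤ v x)
    (hineq : ∀ φ : Rn N → ℝ, memW0 N p s Ω φ → (∀ᵐ x, 0 ≤ φ x) →
      (∫ z : Rn N × Rn N, gker N p s u φ z) ≤ ∫ z : Rn N × Rn N, gker N p s v φ z) :
    ∀ᵐ x, x ∈ Ω → u x ≤ v x :=
  statement5_general N hN p s hp hs Ω hΩb u v hu hv hout hineq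

end
end

section
/- There exists a constant C > 0, depending only on p and s, such that for all real numbers x, ε with 0 < ε < x: |∫_{{y ∈ ℝ : |y−x| ≥ ε}} (x^s − (y₊)^s)^⟨p−1⟩ / |x−y|^{1+ps} dy| ≤ C · x^{−s} · (x^s − (x−ε)^s)/ε^s, where y₊ = max{y,0}. -/
/-!
Scaling `y = x z` reduces the estimate to `x = 1` and `δ = ε / x ∈ (0, 1)`, with integrand
`K(z) = (1 - (z₊)^s)^⟨p-1⟩ / |1 - z|^(1+ps)`. On `z ≤ 0` it integrates to `1 / (ps)`; the
substitution `z = 1 / w` turns the tail `z ≥ 1 + δ` into `-∫₀^{1/(1+δ)} w^(s-1) K(w) dw`; and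
on `(0, 1)` the difference `K(z) - z^(s-1) K(z)` is the derivative of
`(1 - z^s)^p (1 - z)^(-ps) / (ps)`. Hence the truncated integral equals
`g^p / (ps) - ∫_{1-δ}^{1/(1+δ)} w^(s-1) K(w) dw` with `g = (1 - (1-δ)^s) / δ^s ∈ (0, 1]`.
The remaining integral runs over an interval of length `≤ δ²` on which `1 - w ≥ δ / 2`, so it
is `O(δ^(p(1-s)))` for small `δ` and `O(1)` otherwise; both are `O(δ^(1-s))`, and
`s δ^(1-s) ≤ g` by Bernoulli's inequality.
-/

open MeasureTheory Metric Set Filter Topology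

noncomputable section

namespace TruncatedFracPLaplacian

open scoped Pointwise

variable {p s δ : ℝ}

def kernel (p s x y : ℝ) : ℝ := spow (x ^ s - max y 0 ^ s) (p - 1) / |x - y| ^ (1 + p * s)

lemma spow_of_pos {t : ℝ} (ht : 0 < t) (q : ℝ) : spow t q = t ^ q := by
  rw [spow, abs_of_pos ht, ← Real.rpow_add_one ht.ne', sub_add_cancel]

lemma spow_of_neg {t : ℝ} (ht : t < 0) (q : ℝ) : spow t q = -(-t) ^ q := by
  rw [spow, abs_of_neg ht, ← neg_neg t, neg_neg (-t), mul_neg,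
    ← Real.rpow_add_one (neg_pos.2 ht).ne', sub_add_cancel]

lemma spow_mul_of_pos {c : ℝ} (hc : 0 < c) (t q : ℝ) : spow (c * t) q = c ^ q * spow t q := by
  rw [spow, spow, abs_mul, abs_of_pos hc, Real.mul_rpow hc.le (abs_nonneg t),
    Real.rpow_sub_one hc.ne']
  field_simp

lemma kernel_mul_of_pos {x : ℝ} (hx : 0 < x) (z : ℝ) :
    kernel p s x (x * z) = x ^ (-(1 + s)) * kernel p s 1 z := by
  have hmax : max (x * z) 0 = x * max z 0 := by
    rw [← mul_zero x, ← mul_max_of_nonneg _ _ hx.le, mul_zero]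
  have hnum : x ^ s - (x * max z 0) ^ s = x ^ s * (1 - max z 0 ^ s) := by
    rw [Real.mul_rpow hx.le (le_max_right _ _)]; ring
  have hden : |x - x * z| = x * |1 - z| := by
    rw [← mul_one_sub, abs_mul, abs_of_pos hx]
  have hexp : x ^ (-(1 + s)) = (x ^ s) ^ (p - 1) / x ^ (1 + p * s) := by
    rw [← Real.rpow_mul hx.le, ← Real.rpow_sub hx]; ring_nf
  rw [kernel, kernel, hmax, hnum, hden, spow_mul_of_pos (Real.rpow_pos_of_pos hx s),
    Real.mul_rpow hx.le (abs_nonneg _), Real.one_rpow, hexp]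
  ring

lemma smul_setOf_le_abs_sub_one {x : ℝ} (hx : 0 < x) (ε : ℝ) :
    x • {z : ℝ | ε / x ≤ |z - 1|} = {y : ℝ | ε ≤ |y - x|} := by
  ext y
  rw [mem_smul_set_iff_inv_smul_mem₀ hx.ne', mem_ofPred_eq, mem_ofPred_eq, smul_eq_mul,
    div_le_iff₀ hx, ← abs_of_pos hx, ← abs_mul, abs_of_pos hx]
  field_simp

lemma integral_kernel_eq_rpow_mul {x : ℝ} (hx : 0 < x) (ε : ℝ) :
    ∫ y in {y : ℝ | ε ≤ |y - x|}, kernel p s x y =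
      x ^ (-s) * ∫ z in {z : ℝ | ε / x ≤ |z - 1|}, kernel p s 1 z := by
  have h := Measure.setIntegral_comp_smul_of_pos volume (kernel p s x) {z : ℝ | ε / x ≤ |z - 1|} hx
  simp only [smul_eq_mul, Module.finrank_self, pow_one, kernel_mul_of_pos hx,
    smul_setOf_le_abs_sub_one hx, integral_const_mul] at h
  rw [eq_inv_mul_iff_mul_eq₀ hx.ne'] at h
  rw [← h, ← mul_assoc, mul_comm x, ← Real.rpow_add_one hx.ne']
  ring_nf

def innerKernel (p s z : ℝ) : ℝ := (1 - z ^ s) ^ (p - 1) * (1 - z) ^ (-(1 + p * s))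

def outerKernel (p s w : ℝ) : ℝ := w ^ (s - 1) * innerKernel p s w

lemma kernel_one_of_nonpos (hs : 0 < s) {z : ℝ} (hz : z ≤ 0) :
    kernel p s 1 z = (1 - z) ^ (-(1 + p * s)) := by
  rw [kernel, max_eq_right hz, Real.zero_rpow hs.ne', Real.one_rpow, sub_zero,
    spow_of_pos one_pos, Real.one_rpow, abs_of_pos (by linarith), Real.rpow_neg (by linarith),
    one_div]

lemma kernel_one_of_mem_Ico (hs : 0 < s) {z : ℝ} (hz0 : 0 ≤ z) (hz1 : z < 1) :
    kernel p s 1 z = innerKernel p s z := by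
  have hzs : z ^ s < 1 := Real.rpow_lt_one hz0 hz1 hs
  rw [kernel, innerKernel, max_eq_left hz0, Real.one_rpow, spow_of_pos (by linarith),
    abs_of_pos (by linarith), Real.rpow_neg (by linarith), div_eq_mul_inv]

lemma kernel_one_inv (hs : 0 < s) {w : ℝ} (hw0 : 0 < w) (hw1 : w < 1) :
    kernel p s 1 w⁻¹ = -(w ^ 2 * outerKernel p s w) := by
  have hws : w ^ s < 1 := Real.rpow_lt_one hw0.le hw1 hs
  have hws0 : 0 < w ^ s := Real.rpow_pos_of_pos hw0 s
  have hnum : 1 - w⁻¹ ^ s = -((1 - w ^ s) / w ^ s) := by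
    rw [Real.inv_rpow hw0.le]; field_simp; ring
  have hden : |1 - w⁻¹| = (1 - w) / w := by
    rw [abs_of_neg (by linarith [one_lt_inv_iff₀.2 ⟨hw0, hw1⟩])]; field_simp; ring
  have hpow : (w ^ s) ^ (p - 1) = w ^ (-(1 + s)) * w ^ (1 + p * s) := by
    rw [← Real.rpow_mul hw0.le, ← Real.rpow_add hw0]; ring_nf
  rw [kernel, max_eq_left (by positivity), Real.one_rpow, hnum,
    spow_of_neg (neg_lt_zero.2 (div_pos (by linarith) hws0)), neg_neg, hden,
    Real.div_rpow (by linarith) hws0.le, Real.div_rpow (by linarith) hw0.le, hpow,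
    outerKernel, innerKernel, Real.rpow_neg (by linarith : (0:ℝ) ≤ 1 - w), Real.rpow_neg hw0.le]
  have hws1 : w ^ (s - 1) = w ^ (1 + s) / w ^ 2 := by
    rw [← Real.rpow_natCast, ← Real.rpow_sub hw0]; ring_nf
  rw [hws1]
  field_simp

lemma continuousOn_innerKernel (hp : 1 ≤ p) (hs : 0 ≤ s) {b : ℝ} (hb : b < 1) :
    ContinuousOn (innerKernel p s) (Icc 0 b) := by
  refine ContinuousOn.mul ?_ ?_
  · exact (continuousOn_const.sub (continuousOn_id.rpow_const fun _ _ => Or.inr hs)).rpow_const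
      fun _ _ => Or.inr (by linarith)
  · exact (continuousOn_const.sub continuousOn_id).rpow_const
      fun z hz => Or.inl (by linarith [hz.2] : (1:ℝ) - z ≠ 0)

lemma innerKernel_nonneg (hs : 0 ≤ s) {z : ℝ} (hz0 : 0 ≤ z) (hz1 : z ≤ 1) :
    0 ≤ innerKernel p s z :=
  mul_nonneg (Real.rpow_nonneg (by linarith [Real.rpow_le_one hz0 hz1 hs]) _)
    (Real.rpow_nonneg (by linarith) _)

lemma outerKernel_nonneg (hs : 0 ≤ s) {w : ℝ} (hw0 : 0 ≤ w) (hw1 : w ≤ 1) :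
    0 ≤ outerKernel p s w :=
  mul_nonneg (Real.rpow_nonneg hw0 _) (innerKernel_nonneg hs hw0 hw1)

lemma one_sub_le_inv_one_add (hδ : 0 ≤ δ) : 1 - δ ≤ (1 + δ)⁻¹ := by
  rw [← one_div, le_div_iff₀ (by linarith)]; nlinarith

lemma integrableOn_outerKernel (hp : 1 ≤ p) (hs : 0 < s) {b : ℝ} (hb : b < 1) :
    IntegrableOn (outerKernel p s) (Icc 0 b) := by
  have hrpow : IntegrableOn (fun w : ℝ => w ^ (s - 1)) (Icc 0 b) := by
    rcases le_or_gt 0 b with hb0 | hb0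
    · rw [integrableOn_Icc_iff_integrableOn_Ioc,
        ← intervalIntegrable_iff_integrableOn_Ioc_of_le hb0]
      exact intervalIntegral.intervalIntegrable_rpow' (by linarith)
    · rw [Icc_eq_empty (not_le.2 hb0)]; exact integrableOn_empty
  exact hrpow.mul_continuousOn (continuousOn_innerKernel hp hs.le hb) isCompact_Icc

lemma intervalIntegrable_outerKernel (hp : 1 ≤ p) (hs : 0 < s) {a b : ℝ} (ha : 0 ≤ a)
    (hab : a ≤ b) (hb : b < 1) : IntervalIntegrable (outerKernel p s) volume a b :=
  (intervalIntegrable_iff_integrableOn_Icc_of_le hab).2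
    ((integrableOn_outerKernel hp hs hb).mono_set (Icc_subset_Icc_left ha))

lemma preimage_one_sub_Ioi_one : (fun z : ℝ => 1 - z) ⁻¹' Ioi 1 = Iio 0 := by
  ext z; simp

lemma integrableOn_Iio_one_sub_rpow {q : ℝ} (hq : 0 < q) :
    IntegrableOn (fun z : ℝ => (1 - z) ^ (-(1 + q))) (Iio 0) := by
  rw [← preimage_one_sub_Ioi_one]
  exact ((Measure.measurePreserving_sub_left volume 1).integrableOn_comp_preimage
    (measurableEmbedding_subLeft 1)).2 (integrableOn_Ioi_rpow_of_lt (by linarith) one_pos)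

lemma integral_Iio_one_sub_rpow {q : ℝ} (hq : 0 < q) :
    ∫ z in Iio 0, (1 - z) ^ (-(1 + q)) = 1 / q := by
  rw [← preimage_one_sub_Ioi_one,
    (Measure.measurePreserving_sub_left volume 1).setIntegral_preimage_emb
      (measurableEmbedding_subLeft 1) (fun t : ℝ => t ^ (-(1 + q))),
    integral_Ioi_rpow_of_lt (by linarith) one_pos, Real.one_rpow, show -(1 + q) + 1 = -q by ring,
    neg_div_neg_eq]

lemma eqOn_kernel_one_Iio (hs : 0 < s) :
    EqOn (kernel p s 1) (fun z => (1 - z) ^ (-(1 + p * s))) (Iio 0) :=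
  fun _ hz => kernel_one_of_nonpos hs (le_of_lt hz)

lemma eqOn_kernel_one_Icc (hs : 0 < s) {a : ℝ} (ha : a < 1) :
    EqOn (kernel p s 1) (innerKernel p s) (Icc 0 a) :=
  fun _ hz => kernel_one_of_mem_Ico hs hz.1 (hz.2.trans_lt ha)

lemma integrableOn_kernel_one_Iic (hp : 1 ≤ p) (hs : 0 < s) {a : ℝ} (ha0 : 0 ≤ a) (ha1 : a < 1) :
    IntegrableOn (kernel p s 1) (Iic a) := by
  rw [← Iio_union_Icc_eq_Iic ha0]
  refine IntegrableOn.union ?_ ?_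
  · exact (integrableOn_Iio_one_sub_rpow (by positivity)).congr_fun
      (eqOn_kernel_one_Iio hs).symm measurableSet_Iio
  · exact ((continuousOn_innerKernel hp hs.le ha1).integrableOn_Icc).congr_fun
      (eqOn_kernel_one_Icc hs ha1).symm measurableSet_Icc

lemma integral_kernel_one_Iic (hp : 1 ≤ p) (hs : 0 < s) {a : ℝ} (ha0 : 0 ≤ a) (ha1 : a < 1) :
    ∫ z in Iic a, kernel p s 1 z = 1 / (p * s) + ∫ z in 0..a, innerKernel p s z := by
  have hint := integrableOn_kernel_one_Iic hp hs ha0 ha1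
  rw [← Iio_union_Icc_eq_Iic ha0] at hint ⊢
  rw [setIntegral_union ((Iio_disjoint_Ici le_rfl).mono_right Icc_subset_Ici_self)
      measurableSet_Icc (hint.mono_set subset_union_left) (hint.mono_set subset_union_right),
    setIntegral_congr_fun measurableSet_Iio (eqOn_kernel_one_Iio hs),
    integral_Iio_one_sub_rpow (by positivity),
    setIntegral_congr_fun measurableSet_Icc (eqOn_kernel_one_Icc hs ha1),
    integral_Icc_eq_integral_Ioc, intervalIntegral.integral_of_le ha0]

lemma image_inv_Ioo_zero {b : ℝ} (hb : 0 < b) : (fun w : ℝ => w⁻¹) '' Ioo 0 b = Ioi b⁻¹ := by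
  rw [Set.image_inv_eq_inv, inv_Ioo_0_left hb]

lemma abs_deriv_inv_smul_kernel_one_inv (hs : 0 < s) {b : ℝ} (hb : b < 1) :
    EqOn (fun w => |-(w ^ 2)⁻¹| • kernel p s 1 w⁻¹) (fun w => -outerKernel p s w) (Ioo 0 b) := by
  intro w hw
  have hw0 : w ≠ 0 := hw.1.ne'
  have hw2 : 0 < w ^ 2 := by positivity
  simp only [smul_eq_mul, abs_neg, abs_of_pos (inv_pos.2 hw2),
    kernel_one_inv hs hw.1 (hw.2.trans hb)]
  field_simp

lemma integrableOn_kernel_one_Ioi (hp : 1 ≤ p) (hs : 0 < s) {b : ℝ} (hb0 : 0 < b) (hb1 : b < 1) :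
    IntegrableOn (kernel p s 1) (Ioi b⁻¹) := by
  rw [← image_inv_Ioo_zero hb0, integrableOn_image_iff_integrableOn_abs_deriv_smul measurableSet_Ioo
    (fun w hw => (hasDerivAt_inv hw.1.ne').hasDerivWithinAt) inv_injective.injOn]
  exact ((integrableOn_outerKernel hp hs hb1).mono_set Ioo_subset_Icc_self).neg.congr_fun
    (abs_deriv_inv_smul_kernel_one_inv hs hb1).symm measurableSet_Ioo

lemma integral_kernel_one_Ioi (hs : 0 < s) {b : ℝ} (hb0 : 0 < b) (hb1 : b < 1) :
    ∫ z in Ioi b⁻¹, kernel p s 1 z = -∫ w in 0..b, outerKernel p s w := by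
  rw [← image_inv_Ioo_zero hb0, integral_image_eq_integral_abs_deriv_smul measurableSet_Ioo
    (fun w hw => (hasDerivAt_inv hw.1.ne').hasDerivWithinAt) inv_injective.injOn,
    setIntegral_congr_fun measurableSet_Ioo (abs_deriv_inv_smul_kernel_one_inv hs hb1),
    integral_neg, intervalIntegral.integral_of_le hb0.le, integral_Ioc_eq_integral_Ioo]

def primitive (p s z : ℝ) : ℝ := (1 - z ^ s) ^ p * (1 - z) ^ (-(p * s)) / (p * s)

def incrRatio (s δ : ℝ) : ℝ := (1 - (1 - δ) ^ s) / δ ^ s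

lemma hasDerivAt_primitive (hp : 0 < p) (hs : 0 < s) {z : ℝ} (hz0 : 0 < z) (hz1 : z < 1) :
    HasDerivAt (primitive p s) (innerKernel p s z - outerKernel p s z) z := by
  have hA : 0 < 1 - z ^ s := by linarith [Real.rpow_lt_one hz0.le hz1 hs]
  have hB : 0 < 1 - z := by linarith
  have dA : HasDerivAt (fun z => (1 - z ^ s) ^ p)
      (p * (1 - z ^ s) ^ (p - 1) * -(s * z ^ (s - 1))) z := by
    have := ((Real.hasDerivAt_rpow_const (p := s) (Or.inl hz0.ne')).const_sub 1).rpow_const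
      (p := p) (Or.inl hA.ne')
    convert this using 1; ring
  have dB : HasDerivAt (fun z => (1 - z) ^ (-(p * s))) (p * s * (1 - z) ^ (-(p * s) - 1)) z := by
    have := ((hasDerivAt_id' z).const_sub 1).rpow_const (p := -(p * s)) (Or.inl hB.ne')
    convert this using 1; ring
  refine ((dA.mul dB).div_const (p * s)).congr_deriv ?_
  have eA : (1 - z ^ s) ^ p = (1 - z ^ s) ^ (p - 1) * (1 - z ^ s) := by
    rw [← Real.rpow_add_one hA.ne', sub_add_cancel]
  have eB : (1 - z) ^ (-(p * s)) = (1 - z) ^ (-(1 + p * s)) * (1 - z) := by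
    rw [← Real.rpow_add_one hB.ne']; ring_nf
  have eB' : (1 - z) ^ (-(p * s) - 1) = (1 - z) ^ (-(1 + p * s)) := by ring_nf
  have ez : z ^ s = z ^ (s - 1) * z := by rw [← Real.rpow_add_one hz0.ne', sub_add_cancel]
  rw [eA, eB, eB', outerKernel, innerKernel]
  -- `ez` is meant for the bare `z ^ s` only, not for the one inside the `(p - 1)`-th power
  generalize (1 - z ^ s) ^ (p - 1) = U
  rw [ez]
  field_simp
  ring

lemma continuousOn_primitive (hp : 0 ≤ p) (hs : 0 ≤ s) {b : ℝ} (hb : b < 1) :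
    ContinuousOn (primitive p s) (Icc 0 b) := by
  refine ContinuousOn.div_const (ContinuousOn.mul ?_ ?_) _
  · exact (continuousOn_const.sub (continuousOn_id.rpow_const fun _ _ => Or.inr hs)).rpow_const
      fun _ _ => Or.inr hp
  · exact (continuousOn_const.sub continuousOn_id).rpow_const
      fun z hz => Or.inl (by linarith [hz.2] : (1:ℝ) - z ≠ 0)

lemma integral_innerKernel_sub_outerKernel (hp : 1 ≤ p) (hs : 0 < s) {a : ℝ} (ha0 : 0 ≤ a)
    (ha1 : a < 1) :
    ∫ z in 0..a, (innerKernel p s z - outerKernel p s z) = primitive p s a - primitive p s 0 := by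
  refine intervalIntegral.integral_eq_sub_of_hasDeriv_right_of_le ha0
    (continuousOn_primitive (by linarith) hs.le ha1)
    (fun z hz => (hasDerivAt_primitive (by linarith) hs hz.1 (hz.2.trans ha1)).hasDerivWithinAt) ?_
  exact (((continuousOn_innerKernel hp hs.le ha1).intervalIntegrable_of_Icc ha0).sub
    (intervalIntegrable_outerKernel hp hs le_rfl ha0 ha1))

lemma primitive_zero (hs : 0 < s) : primitive p s 0 = 1 / (p * s) := by
  simp [primitive, Real.zero_rpow hs.ne']

lemma primitive_one_sub (hδ : 0 < δ) (hδ1 : δ < 1) (hs : 0 ≤ s) :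
    primitive p s (1 - δ) = incrRatio s δ ^ p / (p * s) := by
  have h : 0 ≤ 1 - (1 - δ) ^ s := by
    linarith [Real.rpow_le_one (by linarith : 0 ≤ 1 - δ) (by linarith) hs]
  rw [primitive, incrRatio, sub_sub_cancel, Real.div_rpow h (Real.rpow_nonneg hδ.le s),
    ← Real.rpow_mul hδ.le, Real.rpow_neg hδ.le, mul_comm s p]
  ring

lemma incrRatio_pos (hs : 0 < s) (hδ0 : 0 < δ) (hδ1 : δ ≤ 1) : 0 < incrRatio s δ :=
  div_pos (by linarith [Real.rpow_lt_one (by linarith) (by linarith : 1 - δ < 1) hs])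
    (Real.rpow_pos_of_pos hδ0 s)

lemma incrRatio_le_one (hs1 : s ≤ 1) (hδ0 : 0 < δ) (hδ1 : δ ≤ 1) : incrRatio s δ ≤ 1 := by
  rw [incrRatio, div_le_one (Real.rpow_pos_of_pos hδ0 s)]
  linarith [Real.self_le_rpow_of_le_one hδ0.le hδ1 hs1,
    Real.self_le_rpow_of_le_one (by linarith : 0 ≤ 1 - δ) (by linarith) hs1]

lemma mul_rpow_one_sub_le_incrRatio (hs0 : 0 ≤ s) (hs1 : s ≤ 1) (hδ0 : 0 < δ) (hδ1 : δ ≤ 1) :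
    s * δ ^ (1 - s) ≤ incrRatio s δ := by
  have bernoulli := rpow_one_add_le_one_add_mul_self (by linarith : -1 ≤ -δ) hs0 hs1
  rw [← sub_eq_add_neg] at bernoulli
  rw [incrRatio, le_div_iff₀ (Real.rpow_pos_of_pos hδ0 s), mul_assoc,
    ← Real.rpow_add hδ0, sub_add_cancel, Real.rpow_one]
  linarith

lemma innerKernel_le (hp : 1 ≤ p) (hs0 : 0 ≤ s) (hs1 : s ≤ 1) (hδ0 : 0 < δ) (hδ1 : δ ≤ 1) {w : ℝ}
    (hw : w ∈ Icc (1 - δ) (1 + δ)⁻¹) :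
    innerKernel p s w ≤ δ ^ (p - 1) * (δ / 2) ^ (-(1 + p * s)) := by
  have hw0 : 0 ≤ w := by linarith [hw.1]
  have hw1 : w ≤ 1 - δ / 2 := hw.2.trans <| by
    rw [inv_le_iff_one_le_mul₀ (by linarith)]; nlinarith
  have hws : w ≤ w ^ s := Real.self_le_rpow_of_le_one hw0 (by linarith) hs1
  have hws1 : w ^ s ≤ 1 := Real.rpow_le_one hw0 (by linarith) hs0
  exact mul_le_mul (Real.rpow_le_rpow (by linarith) (by linarith [hw.1]) (by linarith))
    (Real.rpow_le_rpow_of_nonpos (by linarith) (by linarith) (by nlinarith))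
    (Real.rpow_nonneg (by linarith) _) (Real.rpow_nonneg hδ0.le _)

lemma integral_outerKernel_le (hp : 1 ≤ p) (hs0 : 0 < s) (hs1 : s ≤ 1) (hδ0 : 0 < δ)
    (hδ1 : δ < 1) :
    ∫ w in (1 - δ)..(1 + δ)⁻¹, outerKernel p s w ≤
      δ ^ (p - 1) * (δ / 2) ^ (-(1 + p * s)) * ∫ w in (1 - δ)..(1 + δ)⁻¹, w ^ (s - 1) := by
  have hab := one_sub_le_inv_one_add hδ0.le
  rw [← intervalIntegral.integral_const_mul]
  refine intervalIntegral.integral_mono_on hab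
    (intervalIntegrable_outerKernel hp hs0 (by linarith) hab (inv_lt_one_of_one_lt₀ (by linarith)))
    ((intervalIntegral.intervalIntegrable_rpow' (by linarith)).const_mul _) fun w hw => ?_
  rw [outerKernel, mul_comm _ (w ^ _)]
  exact mul_le_mul_of_nonneg_left (innerKernel_le hp hs0.le hs1 hδ0 hδ1.le hw)
    (Real.rpow_nonneg (by linarith [hw.1]) _)

lemma integral_rpow_sub_one_le_inv (hs : 0 < s) {a b : ℝ} (ha : 0 ≤ a) (hab : a ≤ b)
    (hb : b ≤ 1) : ∫ w in a..b, w ^ (s - 1) ≤ 1 / s := by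
  rw [integral_rpow (Or.inl (by linarith)), sub_add_cancel]
  gcongr
  linarith [Real.rpow_le_one (ha.trans hab) hb hs.le, Real.rpow_nonneg ha s]

lemma integral_rpow_sub_one_le_two_mul_sq (hs : 0 < s) (hδ0 : 0 < δ) (hδ : δ ≤ 1 / 2) :
    ∫ w in (1 - δ)..(1 + δ)⁻¹, w ^ (s - 1) ≤ 2 * δ ^ 2 := by
  have hab := one_sub_le_inv_one_add hδ0.le
  have hlen : (1 + δ)⁻¹ - (1 - δ) ≤ δ ^ 2 := by
    rw [sub_le_iff_le_add, inv_le_iff_one_le_mul₀ (by linarith)]; nlinarith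
  calc ∫ w in (1 - δ)..(1 + δ)⁻¹, w ^ (s - 1) ≤ ∫ _ in (1 - δ)..(1 + δ)⁻¹, (2 : ℝ) := by
        refine intervalIntegral.integral_mono_on hab
          (intervalIntegral.intervalIntegrable_rpow' (by linarith)) intervalIntegrable_const
          fun w hw => ?_
        have hw0 : 0 < w := by linarith [hw.1]
        have hw1 : w ≤ 1 := hw.2.trans (inv_le_one_of_one_le₀ (by linarith))
        calc w ^ (s - 1) ≤ w ^ (-1 : ℝ) :=
              Real.rpow_le_rpow_of_exponent_ge hw0 hw1 (by linarith)
          _ ≤ 2 := by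
              rw [Real.rpow_neg_one, inv_le_comm₀ hw0 two_pos]; linarith [hw.1]
    _ ≤ 2 * δ ^ 2 := by
        rw [intervalIntegral.integral_const, smul_eq_mul]; nlinarith

lemma integral_outerKernel_le_of_le_half (hp : 1 ≤ p) (hs0 : 0 < s) (hs1 : s ≤ 1) (hδ0 : 0 < δ)
    (hδ : δ ≤ 1 / 2) :
    ∫ w in (1 - δ)..(1 + δ)⁻¹, outerKernel p s w ≤ 2 * 4 ^ (1 + p * s) / s * δ ^ (1 - s) := by
  refine (integral_outerKernel_le hp hs0 hs1 hδ0 (by linarith)).trans ?_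
  have e1 : (δ / 2) ^ (-(1 + p * s)) = 2 ^ (1 + p * s) * δ ^ (-(1 + p * s)) := by
    rw [Real.div_rpow hδ0.le zero_le_two, Real.rpow_neg zero_le_two, div_inv_eq_mul, mul_comm]
  have e2 : δ ^ (p - 1) * δ ^ (-(1 + p * s)) * δ ^ 2 = δ ^ (p * (1 - s)) := by
    rw [← Real.rpow_natCast, ← Real.rpow_add hδ0, ← Real.rpow_add hδ0]; ring_nf
  have h24 : (2 : ℝ) ^ (1 + p * s) ≤ 4 ^ (1 + p * s) :=
    Real.rpow_le_rpow zero_le_two (by norm_num) (by positivity)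
  have hδp : δ ^ (p * (1 - s)) ≤ δ ^ (1 - s) :=
    Real.rpow_le_rpow_of_exponent_ge hδ0 (by linarith) (by nlinarith)
  calc δ ^ (p - 1) * (δ / 2) ^ (-(1 + p * s)) * ∫ w in (1 - δ)..(1 + δ)⁻¹, w ^ (s - 1)
      ≤ δ ^ (p - 1) * (δ / 2) ^ (-(1 + p * s)) * (2 * δ ^ 2) :=
        mul_le_mul_of_nonneg_left (integral_rpow_sub_one_le_two_mul_sq hs0 hδ0 hδ) (by positivity)
    _ = 2 * (2 ^ (1 + p * s) * δ ^ (p * (1 - s))) := by rw [e1, ← e2]; ring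
    _ ≤ 2 * (4 ^ (1 + p * s) * δ ^ (1 - s)) := by gcongr
    _ ≤ 2 * 4 ^ (1 + p * s) / s * δ ^ (1 - s) := by
        rw [← mul_assoc]; gcongr; exact le_div_self (by positivity) hs0 hs1

lemma integral_outerKernel_le_of_half_lt (hp : 1 ≤ p) (hs0 : 0 < s) (hs1 : s ≤ 1) (hδ : 1 / 2 < δ)
    (hδ1 : δ < 1) :
    ∫ w in (1 - δ)..(1 + δ)⁻¹, outerKernel p s w ≤ 2 * 4 ^ (1 + p * s) / s * δ ^ (1 - s) := by
  have hδ0 : 0 < δ := by linarith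
  refine (integral_outerKernel_le hp hs0 hs1 hδ0 hδ1).trans ?_
  have hK4 : δ ^ (p - 1) * (δ / 2) ^ (-(1 + p * s)) ≤ 4 ^ (1 + p * s) := by
    rw [← one_mul ((4 : ℝ) ^ _), ← inv_inv (4 : ℝ), Real.inv_rpow (by norm_num),
      ← Real.rpow_neg (by norm_num)]
    exact mul_le_mul (Real.rpow_le_one hδ0.le hδ1.le (by linarith))
      (Real.rpow_le_rpow_of_nonpos (by norm_num) (by linarith) (by nlinarith))
      (by positivity) zero_le_one
  have hδs : 1 ≤ 2 * δ ^ (1 - s) := by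
    have := Real.rpow_le_rpow (by norm_num) hδ.le (by linarith : 0 ≤ 1 - s)
    linarith [Real.self_le_rpow_of_le_one (by norm_num : (0 : ℝ) ≤ 1 / 2) (by norm_num)
      (by linarith : 1 - s ≤ 1)]
  calc δ ^ (p - 1) * (δ / 2) ^ (-(1 + p * s)) * ∫ w in (1 - δ)..(1 + δ)⁻¹, w ^ (s - 1)
      ≤ δ ^ (p - 1) * (δ / 2) ^ (-(1 + p * s)) * (1 / s) :=
        mul_le_mul_of_nonneg_left (integral_rpow_sub_one_le_inv hs0 (by linarith)
          (one_sub_le_inv_one_add hδ0.le) (inv_le_one_of_one_le₀ (by linarith))) (by positivity)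
    _ ≤ 4 ^ (1 + p * s) * (1 / s) := by gcongr
    _ ≤ 4 ^ (1 + p * s) * (1 / s) * (2 * δ ^ (1 - s)) := le_mul_of_one_le_right (by positivity) hδs
    _ = 2 * 4 ^ (1 + p * s) / s * δ ^ (1 - s) := by ring

lemma integral_outerKernel_le_rpow (hp : 1 ≤ p) (hs0 : 0 < s) (hs1 : s ≤ 1) (hδ0 : 0 < δ)
    (hδ1 : δ < 1) :
    ∫ w in (1 - δ)..(1 + δ)⁻¹, outerKernel p s w ≤ 2 * 4 ^ (1 + p * s) / s * δ ^ (1 - s) := by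
  rcases le_or_gt δ (1 / 2) with hδ | hδ
  · exact integral_outerKernel_le_of_le_half hp hs0 hs1 hδ0 hδ
  · exact integral_outerKernel_le_of_half_lt hp hs0 hs1 hδ hδ1

lemma setOf_le_abs_sub_one (δ : ℝ) : {z : ℝ | δ ≤ |z - 1|} = Iic (1 - δ) ∪ Ici (1 + δ) := by
  ext z
  simp only [mem_ofPred_eq, mem_union, mem_Iic, mem_Ici, le_abs]
  constructor <;> rintro (h | h) <;> [right; left; right; left] <;> linarith

lemma integral_kernel_one_eq (hp : 1 ≤ p) (hs : 0 < s) (hδ0 : 0 < δ) (hδ1 : δ < 1) :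
    ∫ z in {z : ℝ | δ ≤ |z - 1|}, kernel p s 1 z =
      incrRatio s δ ^ p / (p * s) - ∫ w in (1 - δ)..(1 + δ)⁻¹, outerKernel p s w := by
  have hb0 : 0 < (1 + δ)⁻¹ := inv_pos.2 (by linarith)
  have hb1 : (1 + δ)⁻¹ < 1 := inv_lt_one_of_one_lt₀ (by linarith)
  have hab := one_sub_le_inv_one_add hδ0.le
  have hright : IntegrableOn (kernel p s 1) (Ici (1 + δ)) := by
    rw [integrableOn_Ici_iff_integrableOn_Ioi]
    simpa only [inv_inv] using integrableOn_kernel_one_Ioi hp hs hb0 hb1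
  have htail : ∫ z in Ici (1 + δ), kernel p s 1 z = -∫ w in 0..(1 + δ)⁻¹, outerKernel p s w := by
    simpa only [integral_Ici_eq_integral_Ioi, inv_inv] using integral_kernel_one_Ioi hs hb0 hb1
  have hsplit := intervalIntegral.integral_add_adjacent_intervals
    (intervalIntegrable_outerKernel hp hs le_rfl (by linarith) (hab.trans_lt hb1))
    (intervalIntegrable_outerKernel hp hs (by linarith) hab hb1)
  have hftc := integral_innerKernel_sub_outerKernel hp hs (by linarith : 0 ≤ 1 - δ)
    (by linarith : 1 - δ < 1)
  rw [intervalIntegral.integral_sub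
      ((continuousOn_innerKernel hp hs.le (by linarith : 1 - δ < 1)).intervalIntegrable_of_Icc
        (by linarith))
      (intervalIntegrable_outerKernel hp hs le_rfl (by linarith) (by linarith)),
    primitive_one_sub hδ0 hδ1 hs.le, primitive_zero hs] at hftc
  rw [setOf_le_abs_sub_one, setIntegral_union ((Iic_disjoint_Ici).2 (by linarith))
      measurableSet_Ici (integrableOn_kernel_one_Iic hp hs (by linarith) (by linarith)) hright,
    htail, integral_kernel_one_Iic hp hs (by linarith) (by linarith)]
  linarith

lemma abs_integral_kernel_one_le (hp : 1 ≤ p) (hs0 : 0 < s) (hs1 : s ≤ 1) (hδ0 : 0 < δ)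
    (hδ1 : δ < 1) :
    |∫ z in {z : ℝ | δ ≤ |z - 1|}, kernel p s 1 z| ≤
      (1 / (p * s) + 2 * 4 ^ (1 + p * s) / s ^ 2) * incrRatio s δ := by
  have hps : 0 < p * s := by positivity
  have hg0 : 0 < incrRatio s δ := incrRatio_pos hs0 hδ0 hδ1.le
  have hgp : incrRatio s δ ^ p ≤ incrRatio s δ :=
    Real.rpow_le_self_of_le_one hg0.le (incrRatio_le_one hs1 hδ0 hδ1.le) hp
  have hB0 : 0 ≤ ∫ w in (1 - δ)..(1 + δ)⁻¹, outerKernel p s w :=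
    intervalIntegral.integral_nonneg (one_sub_le_inv_one_add hδ0.le) fun w hw =>
      outerKernel_nonneg hs0.le (by linarith [hw.1])
        (hw.2.trans (inv_le_one_of_one_le₀ (by linarith)))
  have hB : ∫ w in (1 - δ)..(1 + δ)⁻¹, outerKernel p s w ≤
      2 * 4 ^ (1 + p * s) / s ^ 2 * incrRatio s δ := by
    calc _ ≤ 2 * 4 ^ (1 + p * s) / s * δ ^ (1 - s) :=
          integral_outerKernel_le_rpow hp hs0 hs1 hδ0 hδ1
      _ = 2 * 4 ^ (1 + p * s) / s ^ 2 * (s * δ ^ (1 - s)) := by field_simp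
      _ ≤ _ := by gcongr; exact mul_rpow_one_sub_le_incrRatio hs0.le hs1 hδ0 hδ1.le
  rw [integral_kernel_one_eq hp hs0 hδ0 hδ1]
  calc _ ≤ incrRatio s δ ^ p / (p * s) + ∫ w in (1 - δ)..(1 + δ)⁻¹, outerKernel p s w := by
        have : 0 ≤ incrRatio s δ ^ p / (p * s) := by positivity
        exact abs_sub_le_iff.2 ⟨by linarith, by linarith⟩
    _ ≤ incrRatio s δ / (p * s) + 2 * 4 ^ (1 + p * s) / s ^ 2 * incrRatio s δ := by gcongr
    _ = _ := by ring

end TruncatedFracPLaplacian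

open TruncatedFracPLaplacian

/-- uniform estimate for the truncated fractional `p`-Laplacian of
`x ↦ (x₊)^s` on the half-line. -/
theorem statement8 (p s : ℝ) (hp : 1 < p) (hs : s ∈ Set.Ioo (0 : ℝ) 1) :
    ∃ C > (0 : ℝ), ∀ x ε : ℝ, 0 < ε → ε < x →
      |∫ y in {y : ℝ | ε ≤ |y - x|},
          spow (x ^ s - (max y 0) ^ s) (p - 1) / |x - y| ^ (1 + p * s)| ≤
        C * x ^ (-s) * ((x ^ s - (x - ε) ^ s) / ε ^ s) := by
  obtain ⟨hs0, hs1⟩ := hs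
  refine ⟨1 / (p * s) + 2 * 4 ^ (1 + p * s) / s ^ 2, by positivity, fun x ε hε hεx => ?_⟩
  have hx : 0 < x := hε.trans hεx
  have hδ1 : ε / x < 1 := (div_lt_one hx).2 hεx
  have hratio : incrRatio s (ε / x) = (x ^ s - (x - ε) ^ s) / ε ^ s := by
    rw [incrRatio, one_sub_div hx.ne', Real.div_rpow (by linarith) hx.le,
      Real.div_rpow hε.le hx.le]
    field_simp
  calc _ = |∫ y in {y : ℝ | ε ≤ |y - x|}, kernel p s x y| := rfl
    _ = x ^ (-s) * |∫ z in {z : ℝ | ε / x ≤ |z - 1|}, kernel p s 1 z| := by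
        rw [integral_kernel_eq_rpow_mul hx, abs_mul, abs_of_pos (Real.rpow_pos_of_pos hx _)]
    _ ≤ x ^ (-s) * ((1 / (p * s) + 2 * 4 ^ (1 + p * s) / s ^ 2) * incrRatio s (ε / x)) := by
        gcongr
        exact abs_integral_kernel_one_le hp.le hs0 hs1.le (div_pos hε hx) hδ1
    _ = _ := by rw [hratio]; ring

end
end
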